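/- Gaussian elimination for cochain complexes (Bar-Natan): Let 𝒞 be a preadditive category with binary biproducts and let (C, c) be a cochain complex over 𝒞 indexed by ℤ. Suppose that for some fixed n we have decompositions C^n = A^n ⊕ B^n and C^{n+1} = A^{n+1} ⊕ B^{n+1}, and that with respect to these decompositions the differentials are given by c_{n-1} = (α, β)^T : C^{n-1} → A^n ⊕ B^n, c_n = [[φ, δ], [γ, ε]] : A^n ⊕ B^n → A^{n+1} ⊕ B^{n+1}, and c_{n+1} = (μ, ν) : A^{n+1} ⊕ B^{n+1} → C^{n+2}, where φ : A^n → A^{n+1} is an isomorphism. Then (C, c) is chain homotopy equivalent to the cochain complex (D, d) with D^k = C^k for k ∉ {n, n+1}, D^n = B^n, D^{n+1} = B^{n+1}, d_k = c_k for k ∉ {n−1, n, n+1}, d_{n−1} = β, d_n = ε − γ ∘ φ^{−1} ∘ δ, and d_{n+1} = ν. -/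

import Mathlib

/-!
The summand `φ : Aⁿ ⟶ Aⁿ⁺¹` is contractible and can be split off. The objects `Bⁿ` and `Bⁿ⁺¹` are
retracts of `Cⁿ` and `Cⁿ⁺¹`, through the inclusion `(-(δ ≫ φ⁻¹), 𝟙)` into `Aⁿ ⊞ Bⁿ` and the
projection `(-(φ⁻¹ ≫ γ), 𝟙)` out of `Aⁿ⁺¹ ⊞ Bⁿ⁺¹`, and the resulting degreewise idempotent `r ≫ i`
of `C` is `𝟙 + dh + hd` for the homotopy `h = -φ⁻¹ : Aⁿ⁺¹ ⟶ Aⁿ`. Whenever a chain endomorphism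
homotopic to `𝟙` factors degreewise as `r ≫ i` through retracts, the retracts with differential
`i ≫ d ≫ r` form a complex homotopy equivalent to the original one via `r` and `i`. In degree `n`
this differential is the Schur complement `ε - δ ≫ φ⁻¹ ≫ γ`.
-/

open CategoryTheory CategoryTheory.Limits

namespace HomologicalComplex

variable {V : Type*} [Category* V] [Preadditive V] {ι : Type*} {c : ComplexShape ι}
  (K : HomologicalComplex V c) {X : ι → V} (R : ∀ i, Retract (X i) (K.X i)) (e : K ⟶ K)

lemma retract_r_i_comp_d (he : ∀ i, (R i).r ≫ (R i).i = e.f i) (i j : ι) :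
    (R i).r ≫ (R i).i ≫ K.d i j = K.d i j ≫ (R j).r ≫ (R j).i := by
  rw [reassoc_of% he i, e.comm, he j]

variable (he : ∀ i, (R i).r ≫ (R i).i = e.f i)

@[simps]
def ofRetracts : HomologicalComplex V c where
  X := X
  d i j := (R i).i ≫ K.d i j ≫ (R j).r
  shape i j hij := by simp [K.shape i j hij]
  d_comp_d' i j k _ _ := by
    simp only [Category.assoc, reassoc_of% K.retract_r_i_comp_d R e he j k, d_comp_d_assoc,
      zero_comp, comp_zero]

def toOfRetracts : K ⟶ K.ofRetracts R e he where
  f i := (R i).r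
  comm' i j _ := by
    change (R i).r ≫ (R i).i ≫ K.d i j ≫ (R j).r = K.d i j ≫ (R j).r
    rw [reassoc_of% K.retract_r_i_comp_d R e he i j, Retract.retract, Category.comp_id]

def fromOfRetracts : K.ofRetracts R e he ⟶ K where
  f i := (R i).i
  comm' i j _ := by
    change (R i).i ≫ K.d i j = ((R i).i ≫ K.d i j ≫ (R j).r) ≫ (R j).i
    rw [Category.assoc, Category.assoc, ← K.retract_r_i_comp_d R e he, Retract.retract_assoc]

def homotopyEquivOfRetracts (H : Homotopy e (𝟙 K)) : HomotopyEquiv K (K.ofRetracts R e he) where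
  hom := K.toOfRetracts R e he
  inv := K.fromOfRetracts R e he
  homotopyHomInvId := (Homotopy.ofEq (by ext i; exact he i)).trans H
  homotopyInvHomId := Homotopy.ofEq (by ext i; exact (R i).retract)

end HomologicalComplex

namespace CochainComplex

variable {V : Type*} [Category* V] [Preadditive V]

section Replace

variable (K : CochainComplex V ℤ) (n : ℤ)

def replaceX (B₀ B₁ : V) (k : ℤ) : V :=
  if k = n then B₀ else if k = n + 1 then B₁ else K.X k

variable {B₀ B₁ : V}

lemma replaceX_self : K.replaceX n B₀ B₁ n = B₀ := if_pos rfl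

lemma replaceX_add_one : K.replaceX n B₀ B₁ (n + 1) = B₁ := by simp [replaceX]

lemma replaceX_of_ne {k : ℤ} (h₀ : k ≠ n) (h₁ : k ≠ n + 1) : K.replaceX n B₀ B₁ k = K.X k := by
  simp [replaceX, h₀, h₁]

variable (R₀ : Retract B₀ (K.X n)) (R₁ : Retract B₁ (K.X (n + 1)))

def replaceRetract (k : ℤ) : Retract (K.replaceX n B₀ B₁ k) (K.X k) :=
  if h₀ : k = n then
    (eqToIso (by rw [h₀, replaceX_self])).retract.trans (R₀.trans (eqToIso (by rw [h₀])).retract)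
  else if h₁ : k = n + 1 then
    (eqToIso (by rw [h₁, replaceX_add_one])).retract.trans
      (R₁.trans (eqToIso (by rw [h₁])).retract)
  else (eqToIso (K.replaceX_of_ne n h₀ h₁)).retract

@[simp]
lemma replaceRetract_self_i :
    (K.replaceRetract n R₀ R₁ n).i = eqToHom (K.replaceX_self n) ≫ R₀.i := by
  simp [replaceRetract]

@[simp]
lemma replaceRetract_self_r :
    (K.replaceRetract n R₀ R₁ n).r = R₀.r ≫ eqToHom (K.replaceX_self n).symm := by
  simp [replaceRetract]

@[simp]
lemma replaceRetract_add_one_i :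
    (K.replaceRetract n R₀ R₁ (n + 1)).i = eqToHom (K.replaceX_add_one n) ≫ R₁.i := by
  simp [replaceRetract]

@[simp]
lemma replaceRetract_add_one_r :
    (K.replaceRetract n R₀ R₁ (n + 1)).r = R₁.r ≫ eqToHom (K.replaceX_add_one n).symm := by
  simp [replaceRetract]

lemma replaceRetract_of_ne_i {k : ℤ} (h₀ : k ≠ n) (h₁ : k ≠ n + 1) :
    (K.replaceRetract n R₀ R₁ k).i = eqToHom (K.replaceX_of_ne n h₀ h₁) := by
  simp [replaceRetract, h₀, h₁]

lemma replaceRetract_of_ne_r {k : ℤ} (h₀ : k ≠ n) (h₁ : k ≠ n + 1) :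
    (K.replaceRetract n R₀ R₁ k).r = eqToHom (K.replaceX_of_ne n h₀ h₁).symm := by
  simp [replaceRetract, h₀, h₁]

end Replace

section HomotopyAt

variable {K L : CochainComplex V ℤ} (n : ℤ) (s : K.X (n + 1) ⟶ L.X n)

def homotopyHomAt (i j : ℤ) (hji : (ComplexShape.up ℤ).Rel j i) : K.X i ⟶ L.X j :=
  if hj : j = n then (K.XIsoOfEq (by subst hj; exact hji.symm)).hom ≫ s ≫ (L.XIsoOfEq hj.symm).hom
  else 0

lemma nullHomotopicMap'_homotopyHomAt_f_self :
    (Homotopy.nullHomotopicMap' (homotopyHomAt n s)).f n = K.d n (n + 1) ≫ s := by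
  rw [Homotopy.nullHomotopicMap'_f (by simp : (ComplexShape.up ℤ).Rel (n - 1) n) rfl]
  simp [homotopyHomAt]

lemma nullHomotopicMap'_homotopyHomAt_f_add_one :
    (Homotopy.nullHomotopicMap' (homotopyHomAt n s)).f (n + 1) = s ≫ L.d n (n + 1) := by
  rw [Homotopy.nullHomotopicMap'_f (rfl : (ComplexShape.up ℤ).Rel n (n + 1)) rfl]
  simp [homotopyHomAt]

lemma nullHomotopicMap'_homotopyHomAt_f_of_ne {k : ℤ} (h₀ : k ≠ n) (h₁ : k ≠ n + 1) :
    (Homotopy.nullHomotopicMap' (homotopyHomAt n s)).f k = 0 := by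
  rw [Homotopy.nullHomotopicMap'_f (by simp : (ComplexShape.up ℤ).Rel (k - 1) k) rfl]
  simp [homotopyHomAt, h₀, show k - 1 ≠ n by omega]

end HomotopyAt

end CochainComplex

namespace GaussianElimination

open CochainComplex

variable {V : Type*} [Category* V] [Preadditive V] [HasBinaryBiproducts V] {A₀ B₀ A₁ B₁ : V}
  (φ : A₀ ⟶ A₁) [IsIso φ] (δ : B₀ ⟶ A₁) (γ : A₀ ⟶ B₁) (ε : B₀ ⟶ B₁)

lemma lift_comp_matrix :
    biprod.lift (-(δ ≫ inv φ)) (𝟙 B₀) ≫ biprod.desc (biprod.lift φ γ) (biprod.lift δ ε) =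
      (ε - δ ≫ inv φ ≫ γ) ≫ biprod.inr := by
  ext <;> simp [sub_eq_neg_add]

lemma snd_comp_lift_eq_matrix_comp_add_id :
    biprod.snd ≫ biprod.lift (-(δ ≫ inv φ)) (𝟙 B₀) =
      biprod.desc (biprod.lift φ γ) (biprod.lift δ ε) ≫
        biprod.desc (-(inv φ ≫ biprod.inl)) (0 : B₁ ⟶ A₀ ⊞ B₀) + 𝟙 (A₀ ⊞ B₀) := by
  ext <;> simp

lemma desc_comp_inr_eq_comp_matrix_add_id :
    biprod.desc (-(inv φ ≫ γ)) (𝟙 B₁) ≫ biprod.inr =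
      biprod.desc (-(inv φ ≫ biprod.inl)) (0 : B₁ ⟶ A₀ ⊞ B₀) ≫
        biprod.desc (biprod.lift φ γ) (biprod.lift δ ε) + 𝟙 (A₁ ⊞ B₁) := by
  ext <;> simp

variable (C : CochainComplex V ℤ) (n : ℤ) (eN : C.X n ≅ A₀ ⊞ B₀) (eN1 : C.X (n + 1) ≅ A₁ ⊞ B₁)

@[simps]
noncomputable def retract₀ : Retract B₀ (C.X n) where
  i := biprod.lift (-(δ ≫ inv φ)) (𝟙 B₀) ≫ eN.inv
  r := eN.hom ≫ biprod.snd

@[simps]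
noncomputable def retract₁ : Retract B₁ (C.X (n + 1)) where
  i := biprod.inr ≫ eN1.inv
  r := eN1.hom ≫ biprod.desc (-(inv φ ≫ γ)) (𝟙 B₁)

noncomputable def contractingHomotopy : C.X (n + 1) ⟶ C.X n :=
  eN1.hom ≫ biprod.desc (-(inv φ ≫ biprod.inl)) 0 ≫ eN.inv

lemma replaceRetract_r_comp_i
    (hmid : C.d n (n + 1) =
      eN.hom ≫ biprod.desc (biprod.lift φ γ) (biprod.lift δ ε) ≫ eN1.inv) (k : ℤ) :
    (C.replaceRetract n (retract₀ φ δ C n eN) (retract₁ φ γ C n eN1) k).r ≫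
        (C.replaceRetract n (retract₀ φ δ C n eN) (retract₁ φ γ C n eN1) k).i =
      (Homotopy.nullHomotopicMap' (homotopyHomAt n (contractingHomotopy φ C n eN eN1)) + 𝟙 C).f k := by
  rw [HomologicalComplex.add_f_apply, HomologicalComplex.id_f]
  by_cases h₀ : k = n
  · subst h₀
    simp only [replaceRetract_self_i, replaceRetract_self_r, retract₀_i, retract₀_r,
      nullHomotopicMap'_homotopyHomAt_f_self, hmid, contractingHomotopy, Category.assoc,
      eqToHom_trans_assoc, eqToHom_refl, Category.id_comp, Iso.inv_hom_id_assoc]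
    rw [reassoc_of% snd_comp_lift_eq_matrix_comp_add_id φ δ γ ε]
    simp
  by_cases h₁ : k = n + 1
  · subst h₁
    simp only [replaceRetract_add_one_i, replaceRetract_add_one_r, retract₁_i, retract₁_r,
      nullHomotopicMap'_homotopyHomAt_f_add_one, hmid, contractingHomotopy, Category.assoc,
      eqToHom_trans_assoc, eqToHom_refl, Category.id_comp, Iso.inv_hom_id_assoc]
    rw [reassoc_of% desc_comp_inr_eq_comp_matrix_add_id φ δ γ ε]
    simp
  · simp [replaceRetract_of_ne_i _ _ _ _ h₀ h₁, replaceRetract_of_ne_r _ _ _ _ h₀ h₁,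
      nullHomotopicMap'_homotopyHomAt_f_of_ne _ _ h₀ h₁]

end GaussianElimination

open GaussianElimination CochainComplex in
theorem gaussian_elimination
    {𝒞 : Type*} [Category 𝒞] [Preadditive 𝒞] [HasBinaryBiproducts 𝒞]
    (C : CochainComplex 𝒞 ℤ) (n : ℤ)
    (An Bn An1 Bn1 : 𝒞)
    (eN : C.X n ≅ An ⊞ Bn) (eN1 : C.X (n + 1) ≅ An1 ⊞ Bn1)
    (α : C.X (n - 1) ⟶ An) (β : C.X (n - 1) ⟶ Bn)
    (φ : An ⟶ An1) (δ : Bn ⟶ An1) (γ : An ⟶ Bn1) (ε : Bn ⟶ Bn1)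
    (μ : An1 ⟶ C.X (n + 2)) (ν : Bn1 ⟶ C.X (n + 2))
    [IsIso φ]
    (hprev : C.d (n - 1) n = biprod.lift α β ≫ eN.inv)
    (hmid : C.d n (n + 1) =
      eN.hom ≫ biprod.desc (biprod.lift φ γ) (biprod.lift δ ε) ≫ eN1.inv)
    (hnext : C.d (n + 1) (n + 2) = eN1.hom ≫ biprod.desc μ ν) :
    ∃ (D : CochainComplex 𝒞 ℤ) (hXn : D.X n = Bn) (hXn1 : D.X (n + 1) = Bn1)
      (hX : ∀ k, k ≠ n → k ≠ n + 1 → D.X k = C.X k),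
      (∀ (i : ℤ) (h1 : i ≠ n) (h2 : i ≠ n + 1) (h3 : i + 1 ≠ n) (h4 : i + 1 ≠ n + 1),
          D.d i (i + 1) =
            eqToHom (hX i h1 h2) ≫ C.d i (i + 1) ≫ eqToHom (hX (i + 1) h3 h4).symm) ∧
      D.d (n - 1) n =
        eqToHom (hX (n - 1) (by omega) (by omega)) ≫ β ≫ eqToHom hXn.symm ∧
      D.d n (n + 1) = eqToHom hXn ≫ (ε - δ ≫ inv φ ≫ γ) ≫ eqToHom hXn1.symm ∧
      D.d (n + 1) (n + 2) =
        eqToHom hXn1 ≫ ν ≫ eqToHom (hX (n + 2) (by omega) (by omega)).symm ∧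
      Nonempty (HomotopyEquiv C D) := by
  let R := C.replaceRetract n (retract₀ φ δ C n eN) (retract₁ φ γ C n eN1)
  have he := replaceRetract_r_comp_i φ δ γ ε C n eN eN1 hmid
  have H : Homotopy (Homotopy.nullHomotopicMap'
      (homotopyHomAt n (contractingHomotopy φ C n eN eN1)) + 𝟙 C) (𝟙 C) :=
    ((Homotopy.nullHomotopy' _).add (Homotopy.refl _)).trans (Homotopy.ofEq (zero_add _))
  refine ⟨C.ofRetracts R _ he, C.replaceX_self n, C.replaceX_add_one n,
    fun k h₀ h₁ => C.replaceX_of_ne n h₀ h₁, fun i h₀ h₁ h₀' h₁' => ?_, ?_, ?_, ?_,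
    ⟨C.homotopyEquivOfRetracts R _ he H⟩⟩
  · simp [R, replaceRetract_of_ne_i _ _ _ _ h₀ h₁, replaceRetract_of_ne_r _ _ _ _ h₀' h₁']
    rfl
  · simp [R, replaceRetract_of_ne_i _ _ _ _ (by omega : n - 1 ≠ n) (by omega), hprev]
    rfl
  · simp [R, hmid, reassoc_of% lift_comp_matrix φ δ γ ε]
    rfl
  · simp [R, replaceRetract_of_ne_r _ _ _ _ (by omega : n + 2 ≠ n) (by omega), hnext]
    rfl
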